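/- arXiv:1406.6887 — 2 statements merged into one kernel-verified Lean document; each statement's English description precedes it below -/
import Mathlib

section
/- For any configuration x without collisions and any nonzero vector y ∈ ℝ^N, the Hessian quadratic form of W = U + I satisfies ⟨y, D²W(x) y⟩ ≥ 2 m_0 |y|², where m_0 = min{m_1,...,m_N} > 0. In particular W is strictly convex on each connected component of the collision-free configuration space. -/
/-!
Every summand of `U + I` is a function `φ (L x)` of a single linear form `L`, whose Hessian in
direction `y` is `φ'' (L x) · (L y)²`. For `φ t = mᵢ mⱼ / |t|` this is
`2 mᵢ mⱼ / |xᵢ - xⱼ|³ · (yᵢ - yⱼ)² ≥ 0`, and for `φ t = mᵢ t²` it is `2 mᵢ yᵢ²`; so the Hessian of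
`U + I` is at least `2 I(y) ≥ 2 m₀ |y|²`.

On a component `Ω_σ` every difference `xᵢ - xⱼ` has a fixed sign, so each term of `U` is a
nonnegative multiple of `t ↦ t⁻¹` composed with a linear form positive on `Ω_σ`, hence convex;
and `I` is strictly convex because `I(ta + sb) = t I(a) + s I(b) - ts I(a - b)` when `t + s = 1`.
-/

open Finset

noncomputable def Upot {N : ℕ} (m : Fin N → ℝ) (x : EuclideanSpace ℝ (Fin N)) : ℝ :=
  ∑ i, ∑ j ∈ Finset.Ioi i, m i * m j / |x i - x j|

noncomputable def inertia {N : ℕ} (m : Fin N → ℝ) (x : EuclideanSpace ℝ (Fin N)) : ℝ :=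
  ∑ i, m i * x i ^ 2

theorem iteratedFDeriv_comp_clm_apply {E F : Type*} [NormedAddCommGroup E] [NormedSpace ℝ E]
    [NormedAddCommGroup F] [NormedSpace ℝ F] {φ : ℝ → F} (L : E →L[ℝ] ℝ) {x : E} {n : ℕ}
    (hφ : ContDiffAt ℝ n φ (L x)) (v : Fin n → E) :
    iteratedFDeriv ℝ n (φ ∘ L) x v = (∏ i, L (v i)) • iteratedDeriv n φ (L x) := by
  obtain ⟨u, hu, hφu⟩ := hφ.contDiffOn le_rfl (by simp)
  have hV : IsOpen (L ⁻¹' interior u) := isOpen_interior.preimage L.continuous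
  have hx : x ∈ L ⁻¹' interior u := mem_interior_iff_mem_nhds.2 hu
  have hcomp := L.iteratedFDerivWithin_comp_right (hφu.mono interior_subset)
    isOpen_interior.uniqueDiffOn hV.uniqueDiffOn hx le_rfl
  rw [iteratedFDerivWithin_of_isOpen n isOpen_interior hx,
    iteratedFDerivWithin_of_isOpen n hV hx] at hcomp
  rw [hcomp, ContinuousMultilinearMap.compContinuousLinearMap_apply,
    iteratedFDeriv_apply_eq_iteratedDeriv_mul_prod]

theorem contDiffAt_const_div_abs (c : ℝ) {t : ℝ} (ht : t ≠ 0) {n : ℕ} :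
    ContDiffAt ℝ n (fun u => c / |u|) t :=
  contDiffAt_const.div (contDiffAt_abs ht) (abs_ne_zero.2 ht)

theorem iteratedDeriv_two_const_div_abs (c : ℝ) {t : ℝ} (ht : t ≠ 0) :
    iteratedDeriv 2 (fun u => c / |u|) t = 2 * c / |t| ^ 3 := by
  have hinv : iteratedDeriv 2 (fun u : ℝ => u⁻¹) t = 2 / t ^ 3 := by
    rw [iteratedDeriv_eq_iterate, iter_deriv_inv]
    norm_num [zpow_neg]
    ring
  rcases ht.lt_or_gt with h | h
  · have hloc : (fun u => c / |u|) =ᶠ[nhds t] fun u => -c * u⁻¹ := by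
      filter_upwards [Iio_mem_nhds h] with u hu
      rw [abs_of_neg hu, div_neg, div_eq_mul_inv, neg_mul]
    rw [hloc.iteratedDeriv_eq, iteratedDeriv_const_mul_field, hinv, abs_of_neg h]
    ring
  · have hloc : (fun u => c / |u|) =ᶠ[nhds t] fun u => c * u⁻¹ := by
      filter_upwards [Ioi_mem_nhds h] with u hu
      rw [abs_of_pos hu, div_eq_mul_inv]
    rw [hloc.iteratedDeriv_eq, iteratedDeriv_const_mul_field, hinv, abs_of_pos h]
    ring

section Convexity

variable {E : Type*} [AddCommGroup E] [Module ℝ E] {s : Set E}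

theorem convexOn_const_div_abs (hs : Convex ℝ s) {c : ℝ} (hc : 0 ≤ c) (f : E →ₗ[ℝ] ℝ)
    (hf : ∀ x ∈ s, 0 < f x) : ConvexOn ℝ s fun x => c / |f x| := by
  refine (((convexOn_zpow (-1)).comp_linearMap f).subset hf hs).smul hc |>.congr fun x hx => ?_
  simp [abs_of_pos (hf x hx), div_eq_mul_inv]

theorem convexOn_fun_sum {ι : Type*} (hs : Convex ℝ s) {t : Finset ι} {f : ι → E → ℝ}
    (hf : ∀ i ∈ t, ConvexOn ℝ s (f i)) : ConvexOn ℝ s fun x => ∑ i ∈ t, f i x := by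
  classical
  induction t using Finset.induction_on with
  | empty => simpa using convexOn_const 0 hs
  | insert i t hi ih =>
    simp_rw [sum_insert hi]
    exact (hf i (mem_insert_self i t)).add (ih fun j hj => hf j (mem_insert_of_mem hj))

end Convexity

section Component

variable {ι : Type*} [LinearOrder ι] (σ : Equiv.Perm ι)

theorem convex_setOf_strictMono_comp :
    Convex ℝ {x : EuclideanSpace ℝ ι | StrictMono (x ∘ σ)} := by
  have : {x : EuclideanSpace ℝ ι | StrictMono (x ∘ σ)} =
      ⋂ k, ⋂ l, ⋂ (_ : k < l), {x | x (σ k) - x (σ l) < 0} := by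
    ext x
    simp [StrictMono]
  rw [this]
  exact convex_iInter fun k => convex_iInter fun l => convex_iInter fun _ =>
    convex_halfSpace_lt ((EuclideanSpace.proj (σ k) - EuclideanSpace.proj (σ l) :
      EuclideanSpace ℝ ι →L[ℝ] ℝ).toLinearMap.isLinear) 0

theorem forall_lt_or_forall_gt_of_strictMono_comp {i j : ι} (hij : i ≠ j) :
    (∀ x ∈ {x : EuclideanSpace ℝ ι | StrictMono (x ∘ σ)}, x i < x j) ∨
      ∀ x ∈ {x : EuclideanSpace ℝ ι | StrictMono (x ∘ σ)}, x j < x i := by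
  rcases (σ.symm.injective.ne hij).lt_or_gt with h | h
  · exact .inl fun x hx => by simpa using hx h
  · exact .inr fun x hx => by simpa using hx h

end Component

section Potential

variable {N : ℕ} (m : Fin N → ℝ)

theorem Upot_eq_sum_comp : Upot m = fun z => ∑ i, ∑ j ∈ Ioi i,
    ((fun t => m i * m j / |t|) ∘ (EuclideanSpace.proj i - EuclideanSpace.proj j :
      EuclideanSpace ℝ (Fin N) →L[ℝ] ℝ)) z := rfl

theorem inertia_eq_sum_comp : inertia m = fun z => ∑ i,
    ((fun t => m i * t ^ 2) ∘ (EuclideanSpace.proj i : EuclideanSpace ℝ (Fin N) →L[ℝ] ℝ)) z :=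
  rfl

theorem contDiffAt_Upot {x : EuclideanSpace ℝ (Fin N)} (hx : ∀ i j, i ≠ j → x i ≠ x j) {n : ℕ} :
    ContDiffAt ℝ n (Upot m) x := by
  rw [Upot_eq_sum_comp]
  exact ContDiffAt.sum fun i _ => ContDiffAt.sum fun j hj =>
    (contDiffAt_const_div_abs _ (sub_ne_zero.2 (hx i j (mem_Ioi.1 hj).ne))).comp x
      (ContinuousLinearMap.contDiff _).contDiffAt

theorem iteratedFDeriv_two_Upot_apply {x : EuclideanSpace ℝ (Fin N)}
    (hx : ∀ i j, i ≠ j → x i ≠ x j) (y : EuclideanSpace ℝ (Fin N)) :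
    iteratedFDeriv ℝ 2 (Upot m) x ![y, y] =
      ∑ i, ∑ j ∈ Ioi i, 2 * (m i * m j) / |x i - x j| ^ 3 * (y i - y j) ^ 2 := by
  have hne : ∀ i, ∀ j ∈ Ioi i, x i - x j ≠ 0 := fun i j hj =>
    sub_ne_zero.2 (hx i j (mem_Ioi.1 hj).ne)
  have hpair : ∀ i, ∀ j ∈ Ioi i, ContDiffAt ℝ 2 (fun t => m i * m j / |t|) (x i - x j) :=
    fun i j hj => contDiffAt_const_div_abs _ (hne i j hj)
  rw [Upot_eq_sum_comp, iteratedFDeriv_fun_sum_apply fun i _ => ContDiffAt.sum fun j hj =>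
    (hpair i j hj).comp x (ContinuousLinearMap.contDiff _).contDiffAt, _root_.sum_apply]
  refine sum_congr rfl fun i _ => ?_
  rw [iteratedFDeriv_fun_sum_apply fun j hj =>
    (hpair i j hj).comp x (ContinuousLinearMap.contDiff _).contDiffAt, _root_.sum_apply]
  refine sum_congr rfl fun j hj => ?_
  rw [iteratedFDeriv_comp_clm_apply _ (hpair i j hj)]
  simp [iteratedDeriv_two_const_div_abs _ (hne i j hj)]
  ring

theorem iteratedFDeriv_two_Upot_apply_nonneg (hm : ∀ i, 0 ≤ m i) {x : EuclideanSpace ℝ (Fin N)}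
    (hx : ∀ i j, i ≠ j → x i ≠ x j) (y : EuclideanSpace ℝ (Fin N)) :
    0 ≤ iteratedFDeriv ℝ 2 (Upot m) x ![y, y] := by
  rw [iteratedFDeriv_two_Upot_apply m hx]
  exact sum_nonneg fun i _ => sum_nonneg fun j _ => by
    have := hm i; have := hm j; positivity

theorem contDiff_inertia {n : ℕ} : ContDiff ℝ n (inertia m) := by
  unfold inertia
  fun_prop

theorem iteratedFDeriv_two_inertia_apply (x y : EuclideanSpace ℝ (Fin N)) :
    iteratedFDeriv ℝ 2 (inertia m) x ![y, y] = 2 * inertia m y := by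
  have hsq : ∀ i, ContDiff ℝ 2 fun t : ℝ => m i * t ^ 2 := fun i => by fun_prop
  conv_lhs => rw [inertia_eq_sum_comp]
  rw [iteratedFDeriv_fun_sum_apply fun i _ =>
    ((hsq i).comp (ContinuousLinearMap.contDiff _)).contDiffAt, _root_.sum_apply, inertia,
    mul_sum]
  refine sum_congr rfl fun i _ => ?_
  rw [iteratedFDeriv_comp_clm_apply _ (hsq i).contDiffAt]
  simp
  ring

theorem iInf_mul_norm_sq_le_inertia (y : EuclideanSpace ℝ (Fin N)) :
    (⨅ i, m i) * ‖y‖ ^ 2 ≤ inertia m y := by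
  rw [EuclideanSpace.norm_sq_eq, mul_sum, inertia]
  exact sum_le_sum fun i _ => by
    simpa using mul_le_mul_of_nonneg_right (ciInf_le (Finite.bddBelow_range m) i) (sq_nonneg (y i))

theorem inertia_add_smul {a b : EuclideanSpace ℝ (Fin N)} {t s : ℝ} (hts : t + s = 1) :
    inertia m (t • a + s • b) = t * inertia m a + s * inertia m b - t * s * inertia m (a - b) := by
  obtain rfl : s = 1 - t := by linarith
  simp only [inertia, PiLp.add_apply, PiLp.sub_apply, PiLp.smul_apply, smul_eq_mul, mul_sum,
    ← sum_add_distrib, ← sum_sub_distrib]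
  exact sum_congr rfl fun i _ => by ring

theorem inertia_pos (hm : ∀ i, 0 < m i) {x : EuclideanSpace ℝ (Fin N)} (hx : x ≠ 0) :
    0 < inertia m x := by
  obtain ⟨i, hi⟩ : ∃ i, x i ≠ 0 := by
    by_contra! h
    exact hx (PiLp.ext h)
  exact sum_pos' (fun j _ => mul_nonneg (hm j).le (sq_nonneg _))
    ⟨i, mem_univ i, mul_pos (hm i) (by positivity)⟩

theorem strictConvexOn_inertia (hm : ∀ i, 0 < m i) : StrictConvexOn ℝ Set.univ (inertia m) := by
  refine ⟨convex_univ, fun a _ b _ hab t s ht hs hts => ?_⟩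
  rw [inertia_add_smul m hts, smul_eq_mul, smul_eq_mul]
  nlinarith [mul_pos (mul_pos ht hs) (inertia_pos m hm (sub_ne_zero.2 hab))]

theorem convexOn_Upot (hm : ∀ i, 0 ≤ m i) (σ : Equiv.Perm (Fin N)) :
    ConvexOn ℝ {x : EuclideanSpace ℝ (Fin N) | StrictMono (x ∘ σ)} (Upot m) := by
  have hC := convex_setOf_strictMono_comp σ
  refine convexOn_fun_sum hC fun i _ => convexOn_fun_sum hC fun j hj => ?_
  have hc : 0 ≤ m i * m j := mul_nonneg (hm i) (hm j)
  rcases forall_lt_or_forall_gt_of_strictMono_comp σ (mem_Ioi.1 hj).ne with h | h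
  · refine (convexOn_const_div_abs hC hc (EuclideanSpace.proj j - EuclideanSpace.proj i :
      EuclideanSpace ℝ (Fin N) →L[ℝ] ℝ) fun x hx => sub_pos.2 (h x hx)).congr fun x _ => ?_
    simp [abs_sub_comm]
  · exact convexOn_const_div_abs hC hc (EuclideanSpace.proj i - EuclideanSpace.proj j :
      EuclideanSpace ℝ (Fin N) →L[ℝ] ℝ) fun x hx => sub_pos.2 (h x hx)

end Potential

theorem hessian_lower_bound_general {N : ℕ} (m : Fin N → ℝ) (hm : ∀ i, 0 < m i) :
    (∀ x : EuclideanSpace ℝ (Fin N), (∀ i j, i ≠ j → x i ≠ x j) →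
      ∀ y : EuclideanSpace ℝ (Fin N), y ≠ 0 →
        iteratedFDeriv ℝ 2 (fun z => Upot m z + inertia m z) x ![y, y] ≥
          2 * (⨅ i, m i) * ‖y‖ ^ 2) ∧
    (∀ σ : Equiv.Perm (Fin N),
      StrictConvexOn ℝ {x : EuclideanSpace ℝ (Fin N) | StrictMono (x ∘ σ)}
        (fun z => Upot m z + inertia m z)) := by
  refine ⟨fun x hx y _ => ?_, fun σ => ?_⟩
  · rw [fun_iteratedFDeriv_add_apply (contDiffAt_Upot m hx) (contDiff_inertia m).contDiffAt,
      add_apply, iteratedFDeriv_two_inertia_apply]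
    linarith [iteratedFDeriv_two_Upot_apply_nonneg m (fun i => (hm i).le) hx y,
      iInf_mul_norm_sq_le_inertia m y]
  · exact (convexOn_Upot m (fun i => (hm i).le) σ).add_strictConvexOn
      ((strictConvexOn_inertia m hm).subset (Set.subset_univ _) (convex_setOf_strictMono_comp σ))

/-- The Hessian of `W = U + I` is uniformly bounded below by `2·min mᵢ`, and in
particular `W` is strictly convex on each connected component `Ω_σ` of the
collision-free configuration space. -/
theorem hessian_lower_bound {N : ℕ} (hN : 0 < N) (m : Fin N → ℝ) (hm : ∀ i, 0 < m i) :
    (∀ x : EuclideanSpace ℝ (Fin N), (∀ i j, i ≠ j → x i ≠ x j) →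
      ∀ y : EuclideanSpace ℝ (Fin N), y ≠ 0 →
        iteratedFDeriv ℝ 2 (fun z => Upot m z + inertia m z) x ![y, y] ≥
          2 * (⨅ i, m i) * ‖y‖ ^ 2) ∧
    (∀ σ : Equiv.Perm (Fin N),
      StrictConvexOn ℝ {x : EuclideanSpace ℝ (Fin N) | StrictMono (x ∘ σ)}
        (fun z => Upot m z + inertia m z)) :=
  hessian_lower_bound_general m hm
end

section
/- For a polynomial p(s) = −(m_1+m_2)s⁵ − (3m_1+2m_2)s⁴ − (3m_1+m_2)s³ + (m_2+3m_3)s² + (2m_2+3m_3)s + (m_2+m_3) with m_1, m_2, m_3 > 0, there is exactly one positive real root. -/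
/-- If `s` is a positive root of Euler's quintic, then the quintic is negative at any `t > s`. -/
lemma euler_quintic_key (m₁ m₂ m₃ s t : ℝ)
    (h₁ : 0 < m₁) (h₂ : 0 < m₂) (h₃ : 0 < m₃) (hs : 0 < s) (hst : s < t)
    (hroot : -(m₁ + m₂) * s ^ 5 - (3 * m₁ + 2 * m₂) * s ^ 4 - (3 * m₁ + m₂) * s ^ 3 +
        (m₂ + 3 * m₃) * s ^ 2 + (2 * m₂ + 3 * m₃) * s + (m₂ + m₃) = 0) :
    -(m₁ + m₂) * t ^ 5 - (3 * m₁ + 2 * m₂) * t ^ 4 - (3 * m₁ + m₂) * t ^ 3 +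
        (m₂ + 3 * m₃) * t ^ 2 + (2 * m₂ + 3 * m₃) * t + (m₂ + m₃) < 0 := by
  obtain ⟨r, hr1, ht⟩ : ∃ r, 1 < r ∧ t = r * s :=
    ⟨t / s, (one_lt_div hs).mpr hst, by field_simp⟩
  have hr0 : 0 < r := by linarith
  have h35 : r ^ 3 ≤ r ^ 5 := pow_le_pow_right₀ hr1.le (by norm_num)
  have h34 : r ^ 3 ≤ r ^ 4 := pow_le_pow_right₀ hr1.le (by norm_num)
  have h23 : r ^ 2 < r ^ 3 := pow_lt_pow_right₀ hr1 (by norm_num)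
  have h13 : r ^ 1 < r ^ 3 := pow_lt_pow_right₀ hr1 (by norm_num)
  have h03 : 1 < r ^ 3 := one_lt_pow₀ hr1 (by norm_num)
  have hmul : r ^ 3 * (-(m₁ + m₂) * s ^ 5 - (3 * m₁ + 2 * m₂) * s ^ 4 -
      (3 * m₁ + m₂) * s ^ 3 + (m₂ + 3 * m₃) * s ^ 2 + (2 * m₂ + 3 * m₃) * s + (m₂ + m₃)) = 0 := by
    rw [hroot]; ring
  subst ht
  have hr13 : r < r ^ 3 := by calc r = r ^ 1 := (pow_one r).symm
    _ < r ^ 3 := h13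
  have f1 : (m₁ + m₂) * (r ^ 3 * s ^ 5) ≤ (m₁ + m₂) * (r ^ 5 * s ^ 5) :=
    mul_le_mul_of_nonneg_left (mul_le_mul_of_nonneg_right h35 (pow_nonneg hs.le 5))
      (by positivity)
  have f2 : (3 * m₁ + 2 * m₂) * (r ^ 3 * s ^ 4) ≤ (3 * m₁ + 2 * m₂) * (r ^ 4 * s ^ 4) :=
    mul_le_mul_of_nonneg_left (mul_le_mul_of_nonneg_right h34 (pow_nonneg hs.le 4))
      (by positivity)
  have f3 : (m₂ + 3 * m₃) * (r ^ 2 * s ^ 2) < (m₂ + 3 * m₃) * (r ^ 3 * s ^ 2) :=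
    mul_lt_mul_of_pos_left (mul_lt_mul_of_pos_right h23 (pow_pos hs 2)) (by positivity)
  have f4 : (2 * m₂ + 3 * m₃) * (r * s) < (2 * m₂ + 3 * m₃) * (r ^ 3 * s) :=
    mul_lt_mul_of_pos_left (mul_lt_mul_of_pos_right hr13 hs) (by positivity)
  have f5 : (m₂ + m₃) * 1 < (m₂ + m₃) * r ^ 3 := by
    rw [mul_one]
    exact lt_mul_of_one_lt_right (by positivity) h03
  nlinarith [f1, f2, f3, f4, f5, hmul]

/-- Euler's quintic has exactly one positive real root. -/
theorem euler_quintic_unique_positive_root (m₁ m₂ m₃ : ℝ)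
    (h₁ : 0 < m₁) (h₂ : 0 < m₂) (h₃ : 0 < m₃) :
    ∃! s : ℝ, 0 < s ∧
      -(m₁ + m₂) * s ^ 5 - (3 * m₁ + 2 * m₂) * s ^ 4 - (3 * m₁ + m₂) * s ^ 3 +
        (m₂ + 3 * m₃) * s ^ 2 + (2 * m₂ + 3 * m₃) * s + (m₂ + m₃) = 0 := by
  set p : ℝ → ℝ := fun s => -(m₁ + m₂) * s ^ 5 - (3 * m₁ + 2 * m₂) * s ^ 4 -
      (3 * m₁ + m₂) * s ^ 3 + (m₂ + 3 * m₃) * s ^ 2 + (2 * m₂ + 3 * m₃) * s + (m₂ + m₃)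
      with hp
  have hcont : ContinuousOn p (Set.Icc 0 (1 + (4 * m₂ + 7 * m₃) / (m₁ + m₂))) := by
    fun_prop
  set M : ℝ := 1 + (4 * m₂ + 7 * m₃) / (m₁ + m₂) with hM
  have hm12 : 0 < m₁ + m₂ := by linarith
  have hM1 : 1 ≤ M := by
    rw [hM]
    have : 0 ≤ (4 * m₂ + 7 * m₃) / (m₁ + m₂) := by positivity
    linarith
  have hM0 : 0 < M := by linarith
  have hMcube : (4 * m₂ + 7 * m₃) < (m₁ + m₂) * M ^ 3 := by
    have h1 : (4 * m₂ + 7 * m₃) < (m₁ + m₂) * M := by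
      rw [hM]; field_simp; nlinarith
    have h2 : M ≤ M ^ 3 := by
      calc M = M ^ 1 := (pow_one M).symm
        _ ≤ M ^ 3 := pow_le_pow_right₀ hM1 (by norm_num)
    nlinarith
  have hpM : p M < 0 := by
    have h4 : M ^ 3 ≤ M ^ 4 := pow_le_pow_right₀ hM1 (by norm_num)
    have h5 : M ^ 3 ≤ M ^ 5 := pow_le_pow_right₀ hM1 (by norm_num)
    have h2 : M ≤ M ^ 2 := by nlinarith [hM1]
    have h1 : 1 ≤ M ^ 2 := by nlinarith
    have key : (4 * m₂ + 7 * m₃) * M ^ 2 < (m₁ + m₂) * M ^ 5 := by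
      nlinarith [sq_nonneg M, pow_pos hM0 2]
    simp only [hp]
    nlinarith [pow_pos hM0 2, pow_pos hM0 3]
  have hp0 : 0 < p 0 := by simp [hp]; linarith
  have hIVT : (0:ℝ) ∈ p '' Set.Ioo 0 M := by
    apply intermediate_value_Ioo' hM0.le hcont
    exact ⟨hpM, hp0⟩
  obtain ⟨s, hsmem, hsroot⟩ := hIVT
  refine ⟨s, ⟨hsmem.1, hsroot⟩, ?_⟩
  rintro y ⟨hy, hyroot⟩
  by_contra hne
  rcases lt_or_gt_of_ne hne with h | h
  · have := euler_quintic_key m₁ m₂ m₃ y s h₁ h₂ h₃ hy h hyroot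
    simp only [hp] at hsroot
    linarith
  · have := euler_quintic_key m₁ m₂ m₃ s y h₁ h₂ h₃ hsmem.1 h hsroot
    linarith
end
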